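/- Let S be a Γ-semigroup with universal semigroup Σ built with γ₀ ∈ Γ, and suppose S_{γ₀} is completely simple. For any γ ∈ Γ, the subset γS = {γx : x ∈ S} of Σ is completely regular: every γx lies in a subgroup G of Σ with G ⊆ γS. -/
import Mathlib


open FreeSemigroup

section GammaSemigroup

variable {S Γ : Type}

/-- One-step rewriting on words over S ⊕ Γ. -/
inductive GStep (m : S → Γ → S → S) (γ₀ : Γ) : List (S ⊕ Γ) → List (S ⊕ Γ) → Prop
  | gg (u v : List (S ⊕ Γ)) (γ₁ γ₂ : Γ) :
      GStep m γ₀ (u ++ Sum.inr γ₁ :: Sum.inr γ₂ :: v) (u ++ Sum.inr γ₁ :: v)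
  | xgy (u v : List (S ⊕ Γ)) (x : S) (γ : Γ) (y : S) :
      GStep m γ₀ (u ++ Sum.inl x :: Sum.inr γ :: Sum.inl y :: v) (u ++ Sum.inl (m x γ y) :: v)
  | xy (u v : List (S ⊕ Γ)) (x y : S) :
      GStep m γ₀ (u ++ Sum.inl x :: Sum.inl y :: v) (u ++ Sum.inl (m x γ₀ y) :: v)

/-- The defining relations on the free semigroup on S ⊕ Γ. -/
def GRel (m : S → Γ → S → S) (γ₀ : Γ) :
    FreeSemigroup (S ⊕ Γ) → FreeSemigroup (S ⊕ Γ) → Prop :=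
  fun a b =>
    (∃ γ₁ γ₂ : Γ, a = of (Sum.inr γ₁) * of (Sum.inr γ₂) ∧ b = of (Sum.inr γ₁)) ∨
    (∃ (x y : S) (γ : Γ), a = of (Sum.inl x) * of (Sum.inr γ) * of (Sum.inl y) ∧
      b = of (Sum.inl (m x γ y))) ∨
    (∃ x y : S, a = of (Sum.inl x) * of (Sum.inl y) ∧ b = of (Sum.inl (m x γ₀ y)))

/-- The congruence generated by the defining relations. -/
def GCon (m : S → Γ → S → S) (γ₀ : Γ) : Con (FreeSemigroup (S ⊕ Γ)) := conGen (GRel m γ₀)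

/-- The universal semigroup Σ of the Γ-semigroup S. -/
abbrev USem (m : S → Γ → S → S) (γ₀ : Γ) := (GCon m γ₀).Quotient

/-- The canonical map μ : S → Σ. -/
def gmu (m : S → Γ → S → S) (γ₀ : Γ) (x : S) : USem m γ₀ :=
  ((of (Sum.inl x) : FreeSemigroup (S ⊕ Γ)) : (GCon m γ₀).Quotient)

/-- The canonical map Γ → Σ. -/
def giota (m : S → Γ → S → S) (γ₀ : Γ) (γ : Γ) : USem m γ₀ :=
  ((of (Sum.inr γ) : FreeSemigroup (S ⊕ Γ)) : (GCon m γ₀).Quotient)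

/-- Principal left ideal of an element of a semigroup. -/
def pLeft {T : Type} [Semigroup T] (a : T) : Set T := {w | ∃ t : T, w = t * a} ∪ {a}

/-- Principal right ideal of an element of a semigroup. -/
def pRight {T : Type} [Semigroup T] (a : T) : Set T := {w | ∃ t : T, w = a * t} ∪ {a}

/-- Principal left ideal in the Γ-semigroup: SΓx ∪ {x}. -/
def pLeftG (m : S → Γ → S → S) (x : S) : Set S := {y | ∃ (s : S) (γ : Γ), y = m s γ x} ∪ {x}

/-- Principal right ideal in the Γ-semigroup: xΓS ∪ {x}. -/
def pRightG (m : S → Γ → S → S) (x : S) : Set S := {y | ∃ (γ : Γ) (s : S), y = m x γ s} ∪ {x}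

/-- Green's H relation on the Γ-semigroup. -/
def HrelG (m : S → Γ → S → S) (a b : S) : Prop := pLeftG m a = pLeftG m b ∧ pRightG m a = pRightG m b

/-- S_δ is a simple semigroup: its only two-sided ideal is S itself. -/
def SimpleAt (m : S → Γ → S → S) (δ : Γ) : Prop :=
  ∀ J : Set S, J.Nonempty → (∀ t : S, ∀ j ∈ J, m t δ j ∈ J ∧ m j δ t ∈ J) → J = Set.univ

/-- e is an idempotent of S_δ. -/
def IdemAt (m : S → Γ → S → S) (δ : Γ) (e : S) : Prop := m e δ e = e

/-- e is a primitive idempotent of S_δ. -/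
def PrimAt (m : S → Γ → S → S) (δ : Γ) (e : S) : Prop :=
  IdemAt m δ e ∧ ∀ f, IdemAt m δ f → m e δ f = f → m f δ e = f → f = e

/-- S_δ is completely simple. -/
def CSimpleAt (m : S → Γ → S → S) (δ : Γ) : Prop := SimpleAt m δ ∧ ∃ e, PrimAt m δ e

/-- S_δ has no zero element. -/
def NoZeroAt (m : S → Γ → S → S) (δ : Γ) : Prop := ¬ ∃ z : S, ∀ t : S, m z δ t = z ∧ m t δ z = z

/-- L is a left ideal of S_δ. -/
def LIdealAt (m : S → Γ → S → S) (δ : Γ) (L : Set S) : Prop :=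
  L.Nonempty ∧ ∀ t : S, ∀ l ∈ L, m t δ l ∈ L

/-- L is a minimal left ideal of S_δ. -/
def MinLIdealAt (m : S → Γ → S → S) (δ : Γ) (L : Set S) : Prop :=
  LIdealAt m δ L ∧ ∀ L' ⊆ L, LIdealAt m δ L' → L' = L

/-- S_δ is a group. -/
def GroupAt (m : S → Γ → S → S) (δ : Γ) : Prop :=
  ∃ e : S, (∀ a, m e δ a = a ∧ m a δ e = a) ∧ ∀ a, ∃ b, m a δ b = e ∧ m b δ a = e

/-- G is a subgroup (a sub-semigroup that is a group) of the semigroup T. -/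
def IsSubgroupOf {T : Type} [Semigroup T] (G : Set T) : Prop :=
  (∀ a ∈ G, ∀ b ∈ G, a * b ∈ G) ∧
  ∃ e ∈ G, (∀ g ∈ G, e * g = g ∧ g * e = g) ∧ ∀ g ∈ G, ∃ h ∈ G, g * h = e ∧ h * g = e

/-- The set Σ' = Σ \ Γ. -/
def USem' (m : S → Γ → S → S) (γ₀ : Γ) : Set (USem m γ₀) := {w | ¬ ∃ γ : Γ, w = giota m γ₀ γ}

end GammaSemigroup


section AuxProof

variable {S Γ : Type} {m : S → Γ → S → S} {γ₀ : Γ}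

private lemma key2 (m : S → Γ → S → S) (γ₀ : Γ) (a b : S) (δ : Γ) :
    gmu m γ₀ a * giota m γ₀ δ * gmu m γ₀ b = gmu m γ₀ (m a δ b) := by
  simp only [gmu, giota]
  rw [← Con.coe_mul, ← Con.coe_mul]
  exact (Con.eq _).mpr (ConGen.Rel.of _ _ (Or.inr (Or.inl ⟨a, b, δ, rfl, rfl⟩)))

private lemma gen_ideal
    (assoc : ∀ (a b c : S) (α β : Γ), m (m a α b) β c = m a α (m b β c))
    (hs : SimpleAt m γ₀) (a x : S) :
    x = a ∨ (∃ t, x = m t γ₀ a) ∨ (∃ t, x = m a γ₀ t) ∨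
      ∃ t t', x = m t γ₀ (m a γ₀ t') := by
  set J : Set S := {x | x = a ∨ (∃ t, x = m t γ₀ a) ∨ (∃ t, x = m a γ₀ t) ∨
      ∃ t t', x = m t γ₀ (m a γ₀ t')} with hJdef
  have hclosed : ∀ t : S, ∀ j ∈ J, m t γ₀ j ∈ J ∧ m j γ₀ t ∈ J := by
    rintro t j (rfl | ⟨t', rfl⟩ | ⟨t', rfl⟩ | ⟨t', t'', rfl⟩)
    · exact ⟨Or.inr (Or.inl ⟨t, rfl⟩), Or.inr (Or.inr (Or.inl ⟨t, rfl⟩))⟩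
    · refine ⟨Or.inr (Or.inl ⟨m t γ₀ t', (assoc ..).symm⟩),
        Or.inr (Or.inr (Or.inr ⟨t', t, ?_⟩))⟩
      rw [assoc]
    · refine ⟨Or.inr (Or.inr (Or.inr ⟨t, t', rfl⟩)),
        Or.inr (Or.inr (Or.inl ⟨m t' γ₀ t, ?_⟩))⟩
      rw [assoc]
    · refine ⟨Or.inr (Or.inr (Or.inr ⟨m t γ₀ t', t'', (assoc ..).symm⟩)),
        Or.inr (Or.inr (Or.inr ⟨t', m t'' γ₀ t, ?_⟩))⟩
      rw [assoc, assoc]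
  have huniv : J = Set.univ := hs J ⟨a, Or.inl rfl⟩ hclosed
  have hx : x ∈ J := by rw [huniv]; trivial
  exact hx

private lemma sand
    (assoc : ∀ (a b c : S) (α β : Γ), m (m a α b) β c = m a α (m b β c))
    {e : S} (hidem : m e γ₀ e = e) {w : S} (hw : m e γ₀ (m w γ₀ e) = w) :
    m e γ₀ w = w ∧ m w γ₀ e = w := by
  constructor
  · conv_lhs => rw [← hw]
    rw [← assoc, hidem, hw]
  · conv_lhs => rw [← hw]
    rw [assoc, assoc, hidem, hw]

private lemma inv_lemma
    (assoc : ∀ (a b c : S) (α β : Γ), m (m a α b) β c = m a α (m b β c))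
    (hs : SimpleAt m γ₀) {e : S} (hp : PrimAt m γ₀ e)
    (a : S) (ha : m e γ₀ (m a γ₀ e) = a) :
    ∃ z, m e γ₀ (m z γ₀ e) = z ∧ m a γ₀ z = e ∧ m z γ₀ a = e := by
  obtain ⟨hidem', hprim⟩ := hp
  have hidem : m e γ₀ e = e := hidem'
  obtain ⟨hea, hae⟩ := sand assoc hidem ha
  have key : ∃ u v, m e γ₀ (m u γ₀ e) = u ∧ m e γ₀ (m v γ₀ e) = v ∧
      m u γ₀ (m a γ₀ v) = e := by
    have hEs : ∀ w : S, m e γ₀ (m (m e γ₀ (m w γ₀ e)) γ₀ e) = m e γ₀ (m w γ₀ e) := by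
      intro w
      rw [assoc, assoc, hidem, ← assoc e e, hidem]
    rcases gen_ideal assoc hs a e with h | ⟨t, h⟩ | ⟨t, h⟩ | ⟨t, t', h⟩
    · refine ⟨e, e, ?_, ?_, ?_⟩
      · rw [hidem, hidem]
      · rw [hidem, hidem]
      · rw [← h] at ha ⊢
        exact ha
    · refine ⟨m e γ₀ (m t γ₀ e), e, hEs t, by rw [hidem, hidem], ?_⟩
      rw [hae, assoc, assoc, hea, ← h, hidem]
    · refine ⟨e, m e γ₀ (m t γ₀ e), by rw [hidem, hidem], hEs t, ?_⟩
      rw [← assoc a e, hae, ← assoc a t, ← h, hidem, hidem]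
    · refine ⟨m e γ₀ (m t γ₀ e), m e γ₀ (m t' γ₀ e), hEs t, hEs t', ?_⟩
      rw [← assoc a e, hae, assoc, assoc, ← assoc e a, hea,
        ← assoc a t', ← assoc t, ← h, hidem, hidem]
  obtain ⟨u, v, hu, hv, huav⟩ := key
  obtain ⟨heu, hue⟩ := sand assoc hidem hu
  obtain ⟨hev, hve⟩ := sand assoc hidem hv
  set z := m v γ₀ u with hzdef
  have hez : m e γ₀ z = z := by rw [hzdef, ← assoc, hev]
  have hze : m z γ₀ e = z := by rw [hzdef, assoc, hue]
  have hzaz : m z γ₀ (m a γ₀ z) = z := by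
    rw [hzdef, assoc]
    rw [show m u γ₀ (m a γ₀ (m v γ₀ u)) = u by
      rw [← assoc a v, ← assoc u, huav, heu]]
  have hg : m a γ₀ z = e := by
    refine hprim (m a γ₀ z) ?_ ?_ ?_
    · show m (m a γ₀ z) γ₀ (m a γ₀ z) = m a γ₀ z
      rw [assoc, hzaz]
    · rw [← assoc, hea]
    · rw [assoc, hze]
  have hh : m z γ₀ a = e := by
    refine hprim (m z γ₀ a) ?_ ?_ ?_
    · show m (m z γ₀ a) γ₀ (m z γ₀ a) = m z γ₀ a
      rw [assoc, ← assoc a z, hg, hea]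
    · rw [← assoc, hez]
    · rw [assoc, hae]
  exact ⟨z, by rw [hze, hez], hg, hh⟩

private lemma factor
    (assoc : ∀ (a b c : S) (α β : Γ), m (m a α b) β c = m a α (m b β c))
    (hs : SimpleAt m γ₀) {e : S} (hidem : m e γ₀ e = e) (x : S) :
    ∃ a b, m a γ₀ e = a ∧ m e γ₀ b = b ∧ m a γ₀ b = x := by
  rcases gen_ideal assoc hs e x with h | ⟨t, h⟩ | ⟨t, h⟩ | ⟨t, t', h⟩
  · exact ⟨e, e, hidem, hidem, by rw [hidem, h]⟩
  · exact ⟨m t γ₀ e, e, by rw [assoc, hidem], hidem, by rw [assoc, hidem, h]⟩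
  · exact ⟨e, m e γ₀ t, hidem, by rw [← assoc, hidem], by rw [← assoc, hidem, h]⟩
  · exact ⟨m t γ₀ e, m e γ₀ t', by rw [assoc, hidem], by rw [← assoc, hidem],
      by rw [assoc, ← assoc e e, hidem, h]⟩

private lemma loc
    (assoc : ∀ (a b c : S) (α β : Γ), m (m a α b) β c = m a α (m b β c))
    (hcs : CSimpleAt m γ₀) (x : S) :
    ∃ e', m e' γ₀ e' = e' ∧ m e' γ₀ x = x ∧ m x γ₀ e' = x ∧
      ∀ y, m e' γ₀ y = y → m y γ₀ e' = y →
        ∃ y', m e' γ₀ y' = y' ∧ m y' γ₀ e' = y' ∧ m y γ₀ y' = e' ∧ m y' γ₀ y = e' := by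
  obtain ⟨hs, e, hp⟩ := hcs
  have hidem : m e γ₀ e = e := hp.1
  obtain ⟨a, b, hae, heb, hab⟩ := factor assoc hs hidem x
  set r := m b γ₀ a with hrdef
  have hr : m e γ₀ (m r γ₀ e) = r := by
    rw [hrdef, assoc, hae, ← assoc, heb]
  obtain ⟨r', hr's, hrr', hr'r⟩ := inv_lemma assoc hs hp r hr
  obtain ⟨her', hr'e⟩ := sand assoc hidem hr's
  set e' := m a γ₀ (m r' γ₀ b) with he'def
  have hbx : m b γ₀ x = m r γ₀ b := by rw [← hab, ← assoc, ← hrdef]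
  have he'x : m e' γ₀ x = x := by
    rw [he'def, assoc, assoc, hbx, ← assoc r' r b, hr'r, heb, hab]
  have hxe' : m x γ₀ e' = x := by
    conv_lhs => rw [← hab]
    rw [he'def, assoc, ← assoc b a, ← hrdef, ← assoc r r' b, hrr', heb, hab]
  have hbe' : m b γ₀ e' = b := by
    rw [he'def, ← assoc b a, ← hrdef, ← assoc r r' b, hrr', heb]
  have he'e' : m e' γ₀ e' = e' := by
    nth_rewrite 1 [he'def]
    rw [assoc, assoc, hbe', he'def]
  refine ⟨e', he'e', he'x, hxe', ?_⟩
  intro y hy1 hy2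
  set k := m b γ₀ (m y γ₀ a) with hkdef
  have hk : m e γ₀ (m k γ₀ e) = k := by
    rw [hkdef, assoc, assoc, hae, ← assoc e b, heb]
  obtain ⟨k', hk's, hkk', hk'k⟩ := inv_lemma assoc hs hp k hk
  obtain ⟨hek', hk'e⟩ := sand assoc hidem hk's
  set y' := m a γ₀ (m k' γ₀ b) with hy'def
  have hby'aux : m b γ₀ y' = m r γ₀ (m k' γ₀ b) := by
    rw [hy'def, ← assoc b a, ← hrdef]
  have he'y' : m e' γ₀ y' = y' := by
    nth_rewrite 1 [he'def]
    rw [assoc, assoc, hby'aux, ← assoc r' r, hr'r, ← assoc e k', hek', hy'def]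
  have hy'e' : m y' γ₀ e' = y' := by
    nth_rewrite 1 [hy'def]
    rw [assoc, assoc, hbe', hy'def]
  have hya : m y γ₀ a = m a γ₀ (m r' γ₀ k) := by
    conv_lhs => rw [← hy1]
    rw [he'def, assoc, assoc, assoc, ← hkdef]
  have hyy' : m y γ₀ y' = e' := by
    rw [hy'def, ← assoc y a, hya, assoc, assoc, ← assoc k k', hkk', heb, he'def]
  have hby : m b γ₀ y = m k γ₀ (m r' γ₀ b) := by
    conv_lhs => rw [← hy2]
    rw [he'def, ← assoc y a, ← assoc b, ← hkdef]
  have hy'y : m y' γ₀ y = e' := by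
    rw [hy'def, assoc, assoc, hby, ← assoc k' k, hk'k, ← assoc e r', her', he'def]
  exact ⟨y', he'y', hy'e', hyy', hy'y⟩

end AuxProof

theorem stmt (S Γ : Type) [Nonempty S] [Nonempty Γ] (m : S → Γ → S → S)
    (assoc : ∀ (a b c : S) (α β : Γ), m (m a α b) β c = m a α (m b β c)) (γ₀ : Γ) (hcs : CSimpleAt m γ₀) :
    ∀ (γ : Γ) (x : S), ∃ G : Set (USem m γ₀), IsSubgroupOf G ∧
      giota m γ₀ γ * gmu m γ₀ x ∈ G ∧ G ⊆ {w | ∃ z : S, w = giota m γ₀ γ * gmu m γ₀ z} := by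
  intro γ x
  obtain ⟨e', he'e', he'x, hxe', hinv⟩ := loc assoc hcs x
  set p := m e' γ e' with hpdef
  have hpl : m e' γ₀ p = p := by rw [hpdef, ← assoc, he'e']
  have hpr : m p γ₀ e' = p := by rw [hpdef, assoc, he'e']
  obtain ⟨q, heq, hqe, hpq, hqp⟩ := hinv p hpl hpr
  have mixed : ∀ y₁ y₂ : S, m y₁ γ₀ e' = y₁ → m e' γ₀ y₂ = y₂ →
      m y₁ γ y₂ = m y₁ γ₀ (m p γ₀ y₂) := by
    intro y₁ y₂ h1 h2
    conv_lhs => rw [← h1, ← h2]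
    rw [assoc, ← assoc e' e' y₂, ← hpdef]
  have prodrule : ∀ y₁ y₂ : S,
      (giota m γ₀ γ * gmu m γ₀ y₁) * (giota m γ₀ γ * gmu m γ₀ y₂) =
        giota m γ₀ γ * gmu m γ₀ (m y₁ γ y₂) := by
    intro y₁ y₂
    rw [mul_assoc, ← mul_assoc (gmu m γ₀ y₁), key2]
  refine ⟨{w | ∃ y, m e' γ₀ y = y ∧ m y γ₀ e' = y ∧ w = giota m γ₀ γ * gmu m γ₀ y},
    ⟨?_, ?_⟩, ⟨x, he'x, hxe', rfl⟩, ?_⟩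
  · -- closure
    rintro w₁ ⟨y₁, h11, h12, rfl⟩ w₂ ⟨y₂, h21, h22, rfl⟩
    refine ⟨m y₁ γ y₂, ?_, ?_, prodrule y₁ y₂⟩
    · rw [mixed y₁ y₂ h12 h21, ← assoc e' y₁, h11]
    · rw [mixed y₁ y₂ h12 h21, assoc, assoc, h22]
  · -- identity and inverses
    refine ⟨giota m γ₀ γ * gmu m γ₀ q, ⟨q, heq, hqe, rfl⟩, ?_, ?_⟩
    · rintro w ⟨y, h1, h2, rfl⟩
      constructor
      · rw [prodrule, mixed q y hqe h1, ← assoc q p y, hqp, h1]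
      · rw [prodrule, mixed y q h2 heq, hpq, h2]
    · rintro w ⟨y, h1, h2, rfl⟩
      obtain ⟨y', hy'1, hy'2, hyy', hy'y⟩ := hinv y h1 h2
      have hyb1 : m e' γ₀ (m q γ₀ (m y' γ₀ q)) = m q γ₀ (m y' γ₀ q) := by
        rw [← assoc e' q, heq]
      have hyb2 : m (m q γ₀ (m y' γ₀ q)) γ₀ e' = m q γ₀ (m y' γ₀ q) := by
        rw [assoc, assoc, hqe]
      have hprod1 : m y γ (m q γ₀ (m y' γ₀ q)) = q := by
        rw [mixed y _ h2 hyb1, ← assoc p q, hpq, ← assoc e' y', hy'1,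
          ← assoc y y', hyy', heq]
      have hprod2 : m (m q γ₀ (m y' γ₀ q)) γ y = q := by
        rw [mixed _ y hyb2 h1, assoc, assoc, ← assoc q p y, hqp, h1, hy'y, hqe]
      refine ⟨giota m γ₀ γ * gmu m γ₀ (m q γ₀ (m y' γ₀ q)),
        ⟨m q γ₀ (m y' γ₀ q), hyb1, hyb2, rfl⟩, ?_, ?_⟩
      · rw [prodrule, hprod1]
      · rw [prodrule, hprod2]
  · rintro w ⟨y, _, _, rfl⟩
    exact ⟨y, rfl⟩
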